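/- arXiv:1605.08674 — 5 statements merged into one kernel-verified Lean document; each statement's English description precedes it below -/
import Mathlib

section
/- For every γ > 0 there exists a holomorphic function f₀ : 𝔻 → ℂ that minimizes the planar discrepancy functional, i.e. ρ_{C,γ}(f₀) ≤ ρ_{C,γ}(g) for every holomorphic function g : 𝔻 → ℂ. -/
open MeasureTheory Filter Set Metric Polynomial
open scoped ENNReal Topology NNReal

noncomputable section

/-- Normalized area measure on `ℂ`: `dA = (1/π)·(Lebesgue measure)`. -/
def dA : Measure ℂ := (ENNReal.ofReal Real.pi)⁻¹ • volume

/-- The open annulus `𝔸(s,t) = {z : s < |z| < t}`. -/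
def ann (s t : ℝ) : Set ℂ := ball (0:ℂ) t \ closedBall (0:ℂ) s

/-- The Cauchy–Riemann operator `∂̄u = (u_x + i u_y)/2` for complex-valued functions. -/
def dbar (u : ℂ → ℂ) (z : ℂ) : ℂ :=
  (fderiv ℝ u z 1 + Complex.I * fderiv ℝ u z Complex.I) / 2

/-- The Cauchy–Riemann operator `∂̄u = (u_x + i u_y)/2` for real-valued functions. -/
def dbarR (u : ℂ → ℝ) (z : ℂ) : ℂ :=
  (((fderiv ℝ u z 1 : ℝ) : ℂ) + Complex.I * ((fderiv ℝ u z Complex.I : ℝ) : ℂ)) / 2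

/-- The planar discrepancy functional `ρ_{C,γ}(f) = ∫_𝔻 (|f(z)|e^{-γ|z|²} - 1)² dA(z)`. -/
def rhoC (γ : ℝ) (f : ℂ → ℂ) : ℝ≥0∞ :=
  ∫⁻ z in ball (0:ℂ) 1,
    ENNReal.ofReal ((‖f z‖ * Real.exp (-γ * ‖z‖ ^ 2) - 1) ^ 2) ∂dA

/-- The tight planar discrepancy functional
`ρ*_{C,γ}(f) = ∫_ℂ (|f(z)|e^{-γ|z|²} - 1_𝔻(z))² dA(z)`. -/
def rhoCStar (γ : ℝ) (f : ℂ → ℂ) : ℝ≥0∞ :=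
  ∫⁻ z, ENNReal.ofReal ((‖f z‖ * Real.exp (-γ * ‖z‖ ^ 2)
      - (ball (0:ℂ) 1).indicator (fun _ => (1:ℝ)) z) ^ 2) ∂dA

/-- The planar discrepancy density `ρ_C`. -/
def rhoCd : ℝ≥0∞ :=
  liminf (fun γ : ℝ => ⨅ p : Polynomial ℂ, rhoC γ fun z => p.eval z) atTop

/-- The tight planar discrepancy density `ρ_C*`. -/
def rhoCdStar : ℝ≥0∞ :=
  liminf (fun γ : ℝ => ⨅ p : Polynomial ℂ, rhoCStar γ fun z => p.eval z) atTop

/-- The hyperbolic discrepancy functional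
`ρ_{H,r}(f) = (1/log(1/(1-r²))) ∫_{D(0,r)} ((1-|z|²)|f(z)| - 1)² dA(z)/(1-|z|²)`. -/
def rhoH (r : ℝ) (f : ℂ → ℂ) : ℝ≥0∞ :=
  (ENNReal.ofReal (Real.log (1 / (1 - r ^ 2))))⁻¹ *
    ∫⁻ z in ball (0:ℂ) r,
      ENNReal.ofReal (((1 - ‖z‖ ^ 2) * ‖f z‖ - 1) ^ 2
        / (1 - ‖z‖ ^ 2)) ∂dA

/-- The tight hyperbolic discrepancy functional
`ρ*_{H,r}(f) = (1/log(1/(1-r²))) ∫_𝔻 ((1-|z|²)|f(z)| - 1_{D(0,r)}(z))² dA(z)/(1-|z|²)`. -/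
def rhoHStar (r : ℝ) (f : ℂ → ℂ) : ℝ≥0∞ :=
  (ENNReal.ofReal (Real.log (1 / (1 - r ^ 2))))⁻¹ *
    ∫⁻ z in ball (0:ℂ) 1,
      ENNReal.ofReal (((1 - ‖z‖ ^ 2) * ‖f z‖
        - (ball (0:ℂ) r).indicator (fun _ => (1:ℝ)) z) ^ 2
        / (1 - ‖z‖ ^ 2)) ∂dA

/-- The hyperbolic discrepancy density `ρ_H`. -/
def rhoHd : ℝ≥0∞ :=
  liminf (fun r : ℝ => ⨅ p : Polynomial ℂ, rhoH r fun z => p.eval z) (𝓝[<] (1:ℝ))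

/-- The tight hyperbolic discrepancy density `ρ_H*`. -/
def rhoHdStar : ℝ≥0∞ :=
  liminf (fun r : ℝ => ⨅ p : Polynomial ℂ, rhoHStar r fun z => p.eval z) (𝓝[<] (1:ℝ))

/-- `f` is a minimizer of `ρ_{C,γ}` among holomorphic functions on `𝔻`. -/
def IsMinC (γ : ℝ) (f : ℂ → ℂ) : Prop :=
  DifferentiableOn ℂ f (ball 0 1) ∧
    ∀ g : ℂ → ℂ, DifferentiableOn ℂ g (ball 0 1) → rhoC γ f ≤ rhoC γ g

/-- `f` is a minimizer of `ρ_{H,r}` among holomorphic functions on `𝔻`. -/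
def IsMinH (r : ℝ) (f : ℂ → ℂ) : Prop :=
  DifferentiableOn ℂ f (ball 0 1) ∧
    ∀ g : ℂ → ℂ, DifferentiableOn ℂ g (ball 0 1) → rhoH r f ≤ rhoH r g

end

/-!
Take a minimizing sequence. On `𝔻` the weight `e^{-γ|z|²}` is at least `e^{-|γ|}` and
`x ≤ (x - 1)² + 2`, so a bound on `ρ_{C,γ}` bounds the `L¹` norm on `𝔻`. Averaging the Cauchy
estimate `|aₖ| sᵏ ≤ (2π)⁻¹ ∫ |f(s e^{iθ})| dθ` against `s ds` over `r < s < 1` turns this into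
`|aₖ| rᵏ ≤ C / (2π r (1 - r))`, uniformly along the sequence. A subsequence then has convergent
Taylor coefficients; the limiting power series is holomorphic on `𝔻` and, by dominated
convergence, is the pointwise limit. Fatou's lemma makes it a minimizer.
-/

open scoped Real

theorem lintegral_Ioo_mul_lintegral_circleMap_le {g : ℂ → ℝ≥0∞} (hg : Measurable g) (R : ℝ) :
    ∫⁻ s in Ioo 0 R, ENNReal.ofReal s * ∫⁻ θ in Ioo (-π) π, g (circleMap 0 s θ)
      ≤ ∫⁻ z in ball 0 R, g z := by
  have hpolar : ∀ p : ℝ × ℝ, Complex.polarCoord.symm p = circleMap 0 p.1 p.2 := fun p => by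
    simp [circleMap, Complex.exp_mul_I]
  have hsub : Ioo 0 R ×ˢ Ioo (-π) π ⊆ polarCoord.target :=
    prod_mono Ioo_subset_Ioi_self subset_rfl
  calc ∫⁻ s in Ioo 0 R, ENNReal.ofReal s * ∫⁻ θ in Ioo (-π) π, g (circleMap 0 s θ)
      = ∫⁻ s in Ioo 0 R, ∫⁻ θ in Ioo (-π) π, ENNReal.ofReal s * g (circleMap 0 s θ) := by
        simp only [lintegral_const_mul' _ _ ENNReal.ofReal_ne_top]
    _ = ∫⁻ p : ℝ × ℝ in Ioo 0 R ×ˢ Ioo (-π) π, ENNReal.ofReal p.1 * g (circleMap 0 p.1 p.2) := by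
        rw [Measure.volume_eq_prod ℝ ℝ, ← Measure.prod_restrict, lintegral_prod]
        exact (measurable_fst.ennreal_ofReal.mul
          (hg.comp (by unfold circleMap; fun_prop))).aemeasurable
    _ = ∫⁻ p : ℝ × ℝ in Ioo 0 R ×ˢ Ioo (-π) π, ENNReal.ofReal p.1 •
          (ball 0 R).indicator g (Complex.polarCoord.symm p) := by
        refine setLIntegral_congr_fun (measurableSet_Ioo.prod measurableSet_Ioo) fun p hp => ?_
        rw [hpolar, indicator_of_mem, smul_eq_mul]
        simpa [abs_of_pos hp.1.1] using hp.1.2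
    _ ≤ ∫⁻ p in polarCoord.target, ENNReal.ofReal p.1 •
          (ball 0 R).indicator g (Complex.polarCoord.symm p) := lintegral_mono_set hsub
    _ = ∫⁻ z in ball 0 R, g z := by
        rw [Complex.lintegral_comp_polarCoord_symm, lintegral_indicator measurableSet_ball]

noncomputable def taylorCoeff (f : ℂ → ℂ) (k : ℕ) : ℂ := (k.factorial : ℂ)⁻¹ * iteratedDeriv k f 0

section TaylorCoeff

variable {f : ℂ → ℂ} {R : ℝ}

theorem hasSum_taylorCoeff_mul_pow (hf : DifferentiableOn ℂ f (ball 0 R)) {z : ℂ}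
    (hz : z ∈ ball (0 : ℂ) R) : HasSum (fun k => taylorCoeff f k * z ^ k) (f z) := by
  simpa [taylorCoeff, mul_comm, mul_left_comm] using Complex.hasSum_taylorSeries_on_ball hf hz

theorem cauchyPowerSeries_apply_one_eq_taylorCoeff {s : ℝ} (hf : DifferentiableOn ℂ f (ball 0 R)) (hs : 0 < s)
    (hsR : s < R) (k : ℕ) : cauchyPowerSeries f 0 s k (fun _ => 1) = taylorCoeff f k := by
  lift s to ℝ≥0 using hs.le
  have hps := ((hf.mono (closedBall_subset_ball hsR)).diffContOnCl_ball subset_rfl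
    ).hasFPowerSeriesOnBall (mod_cast hs)
  rw [taylorCoeff, iteratedDeriv_eq_iteratedFDeriv, ← hps.factorial_smul, nsmul_eq_mul,
    inv_mul_cancel_left₀ (by exact_mod_cast k.factorial_ne_zero)]

theorem ofReal_norm_taylorCoeff_mul_pow_le {s : ℝ} (hf : DifferentiableOn ℂ f (ball 0 R))
    (hs : 0 < s) (hsR : s < R) (k : ℕ) :
    ENNReal.ofReal (2 * π * (‖taylorCoeff f k‖ * s ^ k))
      ≤ ∫⁻ θ in Ioo (-π) π, ‖f (circleMap 0 s θ)‖ₑ := by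
  have hcont : Continuous fun θ => f (circleMap 0 s θ) :=
    hf.continuousOn.comp_continuous (continuous_circleMap 0 s) fun θ => by
      simpa [abs_of_pos hs] using hsR
  have hcauchy : 2 * π * (‖taylorCoeff f k‖ * s ^ k)
      ≤ ∫ θ in (0)..(2 * π), ‖f (circleMap 0 s θ)‖ := by
    have hcoeff : ‖taylorCoeff f k‖ ≤ ‖cauchyPowerSeries f 0 s k‖ := by
      simpa [cauchyPowerSeries_apply_one_eq_taylorCoeff hf hs hsR] using
        (cauchyPowerSeries f 0 s k).le_opNorm fun _ => 1
    have h := hcoeff.trans (norm_cauchyPowerSeries_le f 0 s k)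
    rw [abs_of_pos hs, inv_pow, ← div_eq_mul_inv, le_div_iff₀ (by positivity)] at h
    calc 2 * π * (‖taylorCoeff f k‖ * s ^ k)
        ≤ 2 * π * ((2 * π)⁻¹ * ∫ θ in (0)..(2 * π), ‖f (circleMap 0 s θ)‖) := by gcongr
      _ = ∫ θ in (0)..(2 * π), ‖f (circleMap 0 s θ)‖ := by field_simp
  have hperiod : ∫ θ in (0)..(2 * π), ‖f (circleMap 0 s θ)‖
      = ∫ θ in Ioo (-π) π, ‖f (circleMap 0 s θ)‖ := by
    have h := ((periodic_circleMap 0 s).comp fun z => ‖f z‖).intervalIntegral_add_eq (-π) 0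
    simp only [Function.comp_def, zero_add, show -π + 2 * π = π by ring] at h
    rw [← h, intervalIntegral.integral_of_le (by linarith [Real.pi_pos]),
      integral_Ioc_eq_integral_Ioo]
  have hint : IntegrableOn (fun θ => f (circleMap 0 s θ)) (Ioo (-π) π) :=
    (hcont.integrableOn_Icc).mono_set Ioo_subset_Icc_self
  rw [← ofReal_integral_norm_eq_lintegral_enorm hint, ← hperiod]
  exact ENNReal.ofReal_le_ofReal hcauchy

theorem ofReal_norm_taylorCoeff_mul_pow_le_lintegral {r : ℝ}
    (hf : DifferentiableOn ℂ f (ball 0 R)) (hr0 : 0 < r) (k : ℕ) :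
    ENNReal.ofReal (2 * π * r * (R - r) * (‖taylorCoeff f k‖ * r ^ k))
      ≤ ∫⁻ z in ball (0 : ℂ) R, ‖f z‖ₑ := by
  set g : ℂ → ℝ≥0∞ := (ball (0 : ℂ) R).indicator fun z => ‖f z‖ₑ
  have hg : Measurable g := by
    classical
    rw [show g = _ from (piecewise_eq_indicator).symm]
    exact (continuous_enorm.comp_continuousOn hf.continuousOn).measurable_piecewise
      continuousOn_const measurableSet_ball
  calc ENNReal.ofReal (2 * π * r * (R - r) * (‖taylorCoeff f k‖ * r ^ k))
      = ∫⁻ _ in Ioo r R, ENNReal.ofReal (2 * π * (‖taylorCoeff f k‖ * r ^ k) * r) := by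
        rw [setLIntegral_const, Real.volume_Ioo, ← ENNReal.ofReal_mul (by positivity)]
        ring_nf
    _ ≤ ∫⁻ s in Ioo r R, ENNReal.ofReal s * ∫⁻ θ in Ioo (-π) π, g (circleMap 0 s θ) := by
        refine setLIntegral_mono' measurableSet_Ioo fun s hs => ?_
        have hs0 : 0 < s := hr0.trans hs.1
        have hcircle : ∀ θ, g (circleMap 0 s θ) = ‖f (circleMap 0 s θ)‖ₑ := fun θ =>
          indicator_of_mem (by simpa [abs_of_pos hs0] using hs.2) _
        simp only [hcircle]
        calc ENNReal.ofReal (2 * π * (‖taylorCoeff f k‖ * r ^ k) * r)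
            ≤ ENNReal.ofReal (2 * π * (‖taylorCoeff f k‖ * s ^ k) * s) := by
              gcongr <;> exact hs.1.le
          _ = ENNReal.ofReal s * ENNReal.ofReal (2 * π * (‖taylorCoeff f k‖ * s ^ k)) := by
              rw [mul_comm, ENNReal.ofReal_mul hs0.le]
          _ ≤ _ := by gcongr; exact ofReal_norm_taylorCoeff_mul_pow_le hf hs0 hs.2 k
    _ ≤ ∫⁻ s in Ioo 0 R, ENNReal.ofReal s * ∫⁻ θ in Ioo (-π) π, g (circleMap 0 s θ) :=
        lintegral_mono_set (Ioo_subset_Ioo_left hr0.le)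
    _ ≤ ∫⁻ z in ball 0 R, g z := lintegral_Ioo_mul_lintegral_circleMap_le hg R
    _ = ∫⁻ z in ball 0 R, ‖f z‖ₑ := by rw [setLIntegral_indicator measurableSet_ball, inter_self]

end TaylorCoeff

theorem differentiableOn_ofScalarsSum {L : ℕ → ℂ}
    (hL : ∀ r : ℝ, 0 < r → r < 1 → ∃ B, ∀ k, ‖L k‖ * r ^ k ≤ B) :
    DifferentiableOn ℂ (FormalMultilinearSeries.ofScalarsSum (E := ℂ) L) (ball 0 1) := by
  have hradius : 1 ≤ (FormalMultilinearSeries.ofScalars ℂ L).radius := by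
    refine ENNReal.le_of_forall_pos_nnreal_lt fun r hr0 hr1 => ?_
    obtain ⟨B, hB⟩ := hL r hr0 (mod_cast hr1)
    exact FormalMultilinearSeries.le_radius_of_bound _ B (by
      simpa only [FormalMultilinearSeries.ofScalars_norm] using hB)
  refine ((FormalMultilinearSeries.ofScalars ℂ L).hasFPowerSeriesOnBall
    (zero_lt_one.trans_le hradius)).differentiableOn.mono fun z hz => ?_
  rw [mem_ball_zero_iff] at hz
  rw [Metric.mem_eball, edist_zero_right]
  exact (ENNReal.coe_lt_one_iff.2 (mod_cast hz)).trans_le hradius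

theorem tendsto_tsum_mul_pow_of_tendsto {𝕜 : Type*} [NormedField 𝕜] [CompleteSpace 𝕜]
    {a : ℕ → ℕ → 𝕜} {L : ℕ → 𝕜} {z : 𝕜} {r B : ℝ} (hzr : ‖z‖ < r)
    (ha : ∀ n k, ‖a n k‖ * r ^ k ≤ B) (hL : ∀ k, Tendsto (fun n => a n k) atTop (𝓝 (L k))) :
    Tendsto (fun n => ∑' k, a n k * z ^ k) atTop (𝓝 (∑' k, L k * z ^ k)) := by
  have hr : 0 < r := (norm_nonneg z).trans_lt hzr
  refine tendsto_tsum_of_dominated_convergence (bound := fun k => B * (‖z‖ / r) ^ k)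
    ((summable_geometric_of_lt_one (by positivity) ((div_lt_one hr).2 hzr)).mul_left B)
    (fun k => (hL k).mul_const _) (Eventually.of_forall fun n k => ?_)
  calc ‖a n k * z ^ k‖ = ‖a n k‖ * r ^ k * (‖z‖ / r) ^ k := by
        rw [norm_mul, norm_pow, div_pow, mul_assoc, mul_div_cancel₀ _ (by positivity)]
    _ ≤ B * (‖z‖ / r) ^ k := by gcongr; exact ha n k

theorem exists_subseq_tendsto_of_lintegral_enorm_le {F : ℕ → ℂ → ℂ}
    (hF : ∀ n, DifferentiableOn ℂ (F n) (ball 0 1)) {C : ℝ≥0}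
    (hC : ∀ n, ∫⁻ z in ball (0 : ℂ) 1, ‖F n z‖ₑ ≤ C) :
    ∃ f : ℂ → ℂ, DifferentiableOn ℂ f (ball 0 1) ∧ ∃ φ : ℕ → ℕ, StrictMono φ ∧
      ∀ z ∈ ball (0 : ℂ) 1, Tendsto (fun j => F (φ j) z) atTop (𝓝 (f z)) := by
  set B : ℝ → ℝ := fun r => C / (2 * π * r * (1 - r))
  have hcoeff : ∀ n k {r : ℝ}, 0 < r → r < 1 → ‖taylorCoeff (F n) k‖ * r ^ k ≤ B r := by
    intro n k r hr0 hr1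
    have h := (ofReal_norm_taylorCoeff_mul_pow_le_lintegral (hF n) hr0 k).trans (hC n)
    rw [← ENNReal.ofReal_coe_nnreal, ENNReal.ofReal_le_ofReal_iff C.coe_nonneg] at h
    rw [le_div_iff₀ (by have := sub_pos.2 hr1; positivity)]
    linarith
  obtain ⟨L, -, φ, hφ, hL⟩ := (isCompact_univ_pi fun k : ℕ =>
      isCompact_closedBall (0 : ℂ) (B 2⁻¹ / 2⁻¹ ^ k)).isSeqCompact
    (x := fun n k => taylorCoeff (F n) k) fun n => mem_univ_pi.2 fun k => by
      rw [mem_closedBall_zero_iff, le_div_iff₀ (by positivity)]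
      exact hcoeff n k (by norm_num) (by norm_num)
  have hLk : ∀ k, Tendsto (fun j => taylorCoeff (F (φ j)) k) atTop (𝓝 (L k)) :=
    tendsto_pi_nhds.1 hL
  have hLbound : ∀ k {r : ℝ}, 0 < r → r < 1 → ‖L k‖ * r ^ k ≤ B r := fun k r hr0 hr1 =>
    le_of_tendsto ((hLk k).norm.mul_const _) (Eventually.of_forall fun j => hcoeff _ k hr0 hr1)
  refine ⟨FormalMultilinearSeries.ofScalarsSum L,
    differentiableOn_ofScalarsSum fun r hr0 hr1 => ⟨B r, fun k => hLbound k hr0 hr1⟩,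
    φ, hφ, fun z hz => ?_⟩
  rw [mem_ball_zero_iff] at hz
  have hr0 : 0 < (‖z‖ + 1) / 2 := by positivity
  have hr1 : (‖z‖ + 1) / 2 < 1 := by linarith
  have hseries : ∀ j, F (φ j) z = ∑' k, taylorCoeff (F (φ j)) k * z ^ k := fun j =>
    ((hasSum_taylorCoeff_mul_pow (hF (φ j)) (mem_ball_zero_iff.2 hz)).tsum_eq).symm
  simp only [hseries, FormalMultilinearSeries.ofScalars_sum_eq, smul_eq_mul]
  exact tendsto_tsum_mul_pow_of_tendsto (by linarith) (fun j k => hcoeff (φ j) k hr0 hr1) hLk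

theorem volume_eq_ofReal_pi_smul_dA : (volume : Measure ℂ) = ENNReal.ofReal π • dA := by
  rw [dA, smul_smul, ENNReal.mul_inv_cancel (by simp [Real.pi_pos]) ENNReal.ofReal_ne_top,
    one_smul]

theorem dA_ball_zero_one : dA (ball (0 : ℂ) 1) = 1 := by
  rw [dA, Measure.smul_apply, Complex.volume_ball, smul_eq_mul, ENNReal.ofReal_one, one_pow,
    one_mul, ← ENNReal.ofReal_coe_nnreal, NNReal.coe_real_pi,
    ENNReal.inv_mul_cancel (by simp [Real.pi_pos]) ENNReal.ofReal_ne_top]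

theorem rhoC_zero (γ : ℝ) : rhoC γ 0 = 1 := by
  simp [rhoC, dA_ball_zero_one]

theorem le_exp_abs_mul_sq_sub_one_add_two {γ a : ℝ} {z : ℂ} (ha : 0 ≤ a) (hz : ‖z‖ ≤ 1) :
    a ≤ Real.exp |γ| * ((a * Real.exp (-γ * ‖z‖ ^ 2) - 1) ^ 2 + 2) := by
  set x := a * Real.exp (-γ * ‖z‖ ^ 2)
  have hweight : Real.exp (-|γ|) ≤ Real.exp (-γ * ‖z‖ ^ 2) := by
    have := pow_le_one₀ (norm_nonneg z) hz (n := 2)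
    gcongr
    nlinarith [le_abs_self γ, abs_nonneg γ, sq_nonneg ‖z‖]
  calc a = Real.exp |γ| * (a * Real.exp (-|γ|)) := by
        rw [mul_left_comm, ← Real.exp_add, add_neg_cancel, Real.exp_zero, mul_one]
    _ ≤ Real.exp |γ| * x := by gcongr; exact mul_le_mul_of_nonneg_left hweight ha
    _ ≤ Real.exp |γ| * ((x - 1) ^ 2 + 2) := by gcongr; nlinarith [sq_nonneg (x - 3 / 2)]

theorem lintegral_enorm_le_rhoC (γ : ℝ) (f : ℂ → ℂ) :
    ∫⁻ z in ball (0 : ℂ) 1, ‖f z‖ₑ ≤ ENNReal.ofReal (π * Real.exp |γ|) * (rhoC γ f + 2) := by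
  have hpointwise : ∀ z ∈ ball (0 : ℂ) 1, ‖f z‖ₑ ≤ ENNReal.ofReal (Real.exp |γ|) *
      (ENNReal.ofReal ((‖f z‖ * Real.exp (-γ * ‖z‖ ^ 2) - 1) ^ 2) + 2) := fun z hz => by
    rw [← ofReal_norm, ← ENNReal.ofReal_ofNat 2, ← ENNReal.ofReal_add (sq_nonneg _) (by norm_num),
      ← ENNReal.ofReal_mul (Real.exp_pos _).le]
    exact ENNReal.ofReal_le_ofReal
      (le_exp_abs_mul_sq_sub_one_add_two (norm_nonneg _) (mem_ball_zero_iff.1 hz).le)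
  calc ∫⁻ z in ball (0 : ℂ) 1, ‖f z‖ₑ = ENNReal.ofReal π * ∫⁻ z in ball (0 : ℂ) 1, ‖f z‖ₑ ∂dA := by
        rw [volume_eq_ofReal_pi_smul_dA, Measure.restrict_smul, lintegral_smul_measure,
          smul_eq_mul]
    _ ≤ ENNReal.ofReal π * ∫⁻ z in ball (0 : ℂ) 1, ENNReal.ofReal (Real.exp |γ|) *
          (ENNReal.ofReal ((‖f z‖ * Real.exp (-γ * ‖z‖ ^ 2) - 1) ^ 2) + 2) ∂dA := by
        gcongr ENNReal.ofReal π * ?_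
        exact setLIntegral_mono' measurableSet_ball hpointwise
    _ = ENNReal.ofReal (π * Real.exp |γ|) * (rhoC γ f + 2) := by
        rw [lintegral_const_mul' _ _ ENNReal.ofReal_ne_top, lintegral_add_right _ measurable_const,
          setLIntegral_const, dA_ball_zero_one, mul_one, ← rhoC, ← mul_assoc,
          ENNReal.ofReal_mul Real.pi_pos.le]

theorem rhoC_le_liminf {γ : ℝ} {F : ℕ → ℂ → ℂ} {f : ℂ → ℂ}
    (hF : ∀ n, ContinuousOn (F n) (ball 0 1))
    (hlim : ∀ z ∈ ball (0 : ℂ) 1, Tendsto (fun n => F n z) atTop (𝓝 (f z))) :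
    rhoC γ f ≤ liminf (fun n => rhoC γ (F n)) atTop := by
  have hmeas : ∀ n, AEMeasurable (fun z => ENNReal.ofReal
      ((‖F n z‖ * Real.exp (-γ * ‖z‖ ^ 2) - 1) ^ 2)) (dA.restrict (ball 0 1)) := fun n => by
    exact (ENNReal.continuous_ofReal.comp_continuousOn (ContinuousOn.pow (ContinuousOn.sub
      (ContinuousOn.mul (hF n).norm (by fun_prop)) continuousOn_const) 2)).aemeasurable
        measurableSet_ball
  calc rhoC γ f
      = ∫⁻ z in ball 0 1, liminf (fun n => ENNReal.ofReal
          ((‖F n z‖ * Real.exp (-γ * ‖z‖ ^ 2) - 1) ^ 2)) atTop ∂dA := by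
        refine setLIntegral_congr_fun measurableSet_ball fun z hz => (Tendsto.liminf_eq ?_).symm
        exact (ENNReal.continuous_ofReal.tendsto _).comp
          ((((hlim z hz).norm.mul_const _).sub_const 1).pow 2)
    _ ≤ liminf (fun n => rhoC γ (F n)) atTop := lintegral_liminf_le' hmeas

theorem exists_seq_tendsto_iInf₂ {α : Type*} {P : α → Prop} {J : α → ℝ≥0∞}
    (hI : ⨅ (a) (_ : P a), J a ≠ ⊤) :
    ∃ x : ℕ → α, (∀ n, P (x n)) ∧ (∀ n, J (x n) ≤ (⨅ (a) (_ : P a), J a) + 1) ∧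
      Tendsto (fun n => J (x n)) atTop (𝓝 (⨅ (a) (_ : P a), J a)) := by
  set I := ⨅ (a) (_ : P a), J a
  have hex : ∀ n : ℕ, ∃ a, P a ∧ J a < I + ((n : ℝ≥0∞) + 1)⁻¹ := fun n => by
    obtain ⟨a, ha⟩ := iInf_lt_iff.1 (ENNReal.lt_add_right hI (by simp : ((n : ℝ≥0∞) + 1)⁻¹ ≠ 0))
    obtain ⟨hPa, hJa⟩ := iInf_lt_iff.1 ha
    exact ⟨a, hPa, hJa⟩
  choose x hP hlt using hex
  have hsmall : Tendsto (fun n : ℕ => I + ((n : ℝ≥0∞) + 1)⁻¹) atTop (𝓝 I) := by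
    simpa using tendsto_const_nhds.add
      (ENNReal.tendsto_inv_nat_nhds_zero.comp (tendsto_add_atTop_nat 1))
  refine ⟨x, hP, fun n => (hlt n).le.trans ?_, ?_⟩
  · gcongr
    exact ENNReal.inv_le_one.2 le_add_self
  · exact tendsto_of_tendsto_of_tendsto_of_le_of_le tendsto_const_nhds hsmall
      (fun n => iInf₂_le _ (hP n)) fun n => (hlt n).le

theorem planar_minimizer_exists_general (γ : ℝ) :
    ∃ f₀ : ℂ → ℂ, DifferentiableOn ℂ f₀ (ball 0 1) ∧
      ∀ g : ℂ → ℂ, DifferentiableOn ℂ g (ball 0 1) → rhoC γ f₀ ≤ rhoC γ g := by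
  set I := ⨅ (g : ℂ → ℂ) (_ : DifferentiableOn ℂ g (ball 0 1)), rhoC γ g
  have hI : I ≠ ⊤ := ((iInf₂_le (0 : ℂ → ℂ) (differentiableOn_const 0)).trans_eq
    (rhoC_zero γ)).trans_lt ENNReal.one_lt_top |>.ne
  obtain ⟨F, hF, hFI, hFlim⟩ := exists_seq_tendsto_iInf₂ hI
  have hL1 : ∀ n, ∫⁻ z in ball (0 : ℂ) 1, ‖F n z‖ₑ
      ≤ (ENNReal.ofReal (π * Real.exp |γ|) * (I + 1 + 2)).toNNReal := fun n => by
    rw [ENNReal.coe_toNNReal (by finiteness)]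
    exact (lintegral_enorm_le_rhoC γ (F n)).trans (by gcongr; exact hFI n)
  obtain ⟨f₀, hf₀, φ, hφ, hlim⟩ := exists_subseq_tendsto_of_lintegral_enorm_le hF hL1
  refine ⟨f₀, hf₀, fun g hg => ?_⟩
  calc rhoC γ f₀ ≤ liminf (fun j => rhoC γ (F (φ j))) atTop :=
        rhoC_le_liminf (fun j => (hF (φ j)).continuousOn) hlim
    _ = I := (hFlim.comp hφ.tendsto_atTop).liminf_eq
    _ ≤ rhoC γ g := iInf₂_le g hg

/-- for every `γ > 0` there is a holomorphic function `f₀` on `𝔻`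
minimizing the planar discrepancy functional `ρ_{C,γ}`. -/
theorem planar_minimizer_exists (γ : ℝ) (hγ : 0 < γ) :
    ∃ f₀ : ℂ → ℂ, DifferentiableOn ℂ f₀ (ball 0 1) ∧
      ∀ g : ℂ → ℂ, DifferentiableOn ℂ g (ball 0 1) → rhoC γ f₀ ≤ rhoC γ g :=
  planar_minimizer_exists_general γ
end

section
/- Planar L¹-non-concentration: let (γ_k) be a sequence of positive reals tending to ∞, let (δ_k) ⊂ (0,1) tend to 0, and for each k let f_k be a minimizer of ρ_{C,γ_k}. Then ∫_{𝔸(1−δ_k,1)} |f_k(z)| e^{−γ_k|z|²} dA(z) → 0 as k → ∞. -/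
open MeasureTheory Filter Set Metric Polynomial
open scoped ENNReal Topology NNReal

/-
Minimality against `g = 0` gives `∫_𝔻 (w - 1)² ≤ 1` for `w = |f| e^{-γ|z|²}`. On a set `A`, the
pointwise AM-GM bound `w ≤ 1 + a + (w - 1)² / a` then yields `∫_A w ≤ (1 + a) |A| + 1 / a`, and the
annuli `𝔸(1 - δ_k, 1)` have area `1 - (1 - δ_k)² → 0`.
-/

section UniformIntegrability

variable {α ι : Type*} [MeasurableSpace α]

theorem ENNReal.ofReal_le_one_add_add_inv_mul_sq_sub_one (t : ℝ) {a : ℝ≥0∞} (ha : a ≠ 0) :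
    ENNReal.ofReal t ≤ 1 + a + a⁻¹ * ENNReal.ofReal ((t - 1) ^ 2) := by
  rcases eq_or_ne a ∞ with rfl | ha_top
  · simp
  lift a to ℝ≥0 using ha_top
  have ha' : (0 : ℝ) < a := NNReal.coe_pos.mpr (pos_iff_ne_zero.mpr (by exact_mod_cast ha))
  have hreal : t ≤ 1 + a + (t - 1) ^ 2 / a := by
    rw [← sub_le_iff_le_add', le_div_iff₀ ha']
    nlinarith [sq_nonneg (t - 1 - a / 2)]
  calc ENNReal.ofReal t ≤ ENNReal.ofReal (1 + a + (t - 1) ^ 2 / a) :=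
        ENNReal.ofReal_le_ofReal hreal
    _ = 1 + a + (a : ℝ≥0∞)⁻¹ * ENNReal.ofReal ((t - 1) ^ 2) := by
      rw [ENNReal.ofReal_add (by positivity) (by positivity),
        ENNReal.ofReal_add zero_le_one a.coe_nonneg,
        ENNReal.ofReal_div_of_pos ha', ENNReal.div_eq_inv_mul, ENNReal.ofReal_one,
        ENNReal.ofReal_coe_nnreal]

theorem setLIntegral_ofReal_le_add (μ : Measure α) (s : Set α) (w : α → ℝ) {a : ℝ≥0∞}
    (ha : a ≠ 0) :
    ∫⁻ x in s, ENNReal.ofReal (w x) ∂μ ≤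
      (1 + a) * μ s + a⁻¹ * ∫⁻ x in s, ENNReal.ofReal ((w x - 1) ^ 2) ∂μ :=
  calc ∫⁻ x in s, ENNReal.ofReal (w x) ∂μ
      ≤ ∫⁻ x in s, (1 + a + a⁻¹ * ENNReal.ofReal ((w x - 1) ^ 2)) ∂μ :=
        lintegral_mono fun x => ENNReal.ofReal_le_one_add_add_inv_mul_sq_sub_one (w x) ha
    _ = (1 + a) * μ s + a⁻¹ * ∫⁻ x in s, ENNReal.ofReal ((w x - 1) ^ 2) ∂μ := by
        rw [lintegral_add_left measurable_const, setLIntegral_const,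
          lintegral_const_mul' _ _ (ENNReal.inv_ne_top.mpr ha)]

theorem tendsto_setLIntegral_ofReal_zero_of_sq_sub_one_le {l : Filter ι} {μ : Measure α}
    {s : ι → Set α} {w : ι → α → ℝ} {M : ℝ≥0∞} (hM : M ≠ ∞)
    (hs : Tendsto (fun i => μ (s i)) l (𝓝 0))
    (hw : ∀ i, ∫⁻ x in s i, ENNReal.ofReal ((w i x - 1) ^ 2) ∂μ ≤ M) :
    Tendsto (fun i => ∫⁻ x in s i, ENNReal.ofReal (w i x) ∂μ) l (𝓝 0) := by
  rw [ENNReal.tendsto_nhds_zero]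
  intro ε hε
  have hε2 : 0 < ε / 2 := ENNReal.half_pos hε.ne'
  obtain ⟨n, hn0, hn⟩ : ∃ n : ℕ, n ≠ 0 ∧ (n : ℝ≥0∞)⁻¹ * M ≤ ε / 2 := by
    have h : Tendsto (fun n : ℕ => (n : ℝ≥0∞)⁻¹ * M) atTop (𝓝 0) := by
      simpa using ENNReal.Tendsto.mul_const ENNReal.tendsto_inv_nat_nhds_zero (Or.inr hM)
    exact ((eventually_ne_atTop 0).and (h.eventually (eventually_le_nhds hε2))).exists
  have hsmall : ∀ᶠ i in l, (1 + n) * μ (s i) ≤ ε / 2 := by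
    have h : Tendsto (fun i => (1 + (n : ℝ≥0∞)) * μ (s i)) l (𝓝 0) := by
      simpa using ENNReal.Tendsto.const_mul hs (Or.inr (by simp))
    exact h.eventually (eventually_le_nhds hε2)
  filter_upwards [hsmall] with i hi
  calc ∫⁻ x in s i, ENNReal.ofReal (w i x) ∂μ
      ≤ (1 + n) * μ (s i) + (n : ℝ≥0∞)⁻¹ * ∫⁻ x in s i, ENNReal.ofReal ((w i x - 1) ^ 2) ∂μ :=
        setLIntegral_ofReal_le_add μ (s i) (w i) (by exact_mod_cast hn0)
    _ ≤ ε / 2 + ε / 2 := add_le_add hi ((mul_le_mul_right (hw i) _).trans hn)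
    _ = ε := ENNReal.add_halves ε

end UniformIntegrability

theorem dA_apply (s : Set ℂ) : dA s = (NNReal.pi : ℝ≥0∞)⁻¹ * volume s := by
  rw [dA, Measure.smul_apply, smul_eq_mul, ← NNReal.coe_real_pi, ENNReal.ofReal_coe_nnreal]

theorem dA_ball (a : ℂ) (r : ℝ) : dA (ball a r) = ENNReal.ofReal r ^ 2 := by
  rw [dA_apply, Complex.volume_ball, mul_comm, mul_assoc,
    ENNReal.mul_inv_cancel (by simp [NNReal.pi_ne_zero]) ENNReal.coe_ne_top, mul_one]

theorem dA_closedBall (a : ℂ) (r : ℝ) : dA (closedBall a r) = ENNReal.ofReal r ^ 2 := by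
  rw [dA_apply, Complex.volume_closedBall, ← Complex.volume_ball a r, ← dA_apply, dA_ball]

theorem dA_ann (s t : ℝ) : dA (ann s t) = ENNReal.ofReal t ^ 2 - ENNReal.ofReal s ^ 2 := by
  rcases lt_or_ge s t with hst | hts
  · rw [ann, measure_sdiff (closedBall_subset_ball hst) measurableSet_closedBall.nullMeasurableSet
      (by simp [dA_closedBall]), dA_ball, dA_closedBall]
  · have hempty : ann s t = ∅ :=
      Set.sdiff_eq_empty.mpr (ball_subset_closedBall.trans (closedBall_subset_closedBall hts))
    rw [hempty, measure_empty, eq_comm, tsub_eq_zero_of_le (by gcongr)]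

theorem tendsto_dA_ann_one_sub {δ : ℕ → ℝ} (hδ : Tendsto δ atTop (𝓝 0)) :
    Tendsto (fun k => dA (ann (1 - δ k) 1)) atTop (𝓝 0) := by
  have hinner : Tendsto (fun k => ENNReal.ofReal (1 - δ k) ^ 2) atTop (𝓝 1) := by
    simpa using (ENNReal.Tendsto.pow (ENNReal.tendsto_ofReal (tendsto_const_nhds.sub hδ)) :
      Tendsto _ atTop (𝓝 (ENNReal.ofReal (1 - 0) ^ 2)))
  simpa [dA_ann] using ENNReal.Tendsto.sub tendsto_const_nhds hinner (Or.inl ENNReal.one_ne_top)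

theorem IsMinC.rhoC_le_one {γ : ℝ} {f : ℂ → ℂ} (hf : IsMinC γ f) : rhoC γ f ≤ 1 := by
  have hzero : rhoC γ (fun _ => 0) = 1 := by
    simp only [rhoC, norm_zero, zero_mul, zero_sub, neg_one_sq, ENNReal.ofReal_one]
    rw [setLIntegral_const, one_mul, dA_ball, ENNReal.ofReal_one, one_pow]
  exact hzero ▸ hf.2 _ (differentiableOn_const 0)

theorem planar_L1_nonconcentration_general (γ : ℕ → ℝ)
    (δ : ℕ → ℝ) (hδ0 : Tendsto δ atTop (𝓝 0))
    (f : ℕ → ℂ → ℂ) (hf : ∀ k, IsMinC (γ k) (f k)) :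
    Tendsto (fun k => ∫⁻ z in ann (1 - δ k) 1, ENNReal.ofReal
        (‖f k z‖ * Real.exp (-(γ k) * ‖z‖ ^ 2)) ∂dA)
      atTop (𝓝 0) :=
  tendsto_setLIntegral_ofReal_zero_of_sq_sub_one_le ENNReal.one_ne_top
    (tendsto_dA_ann_one_sub hδ0)
    fun k => (lintegral_mono_set sdiff_subset).trans (hf k).rhoC_le_one

/-- planar L¹-non-concentration. If `γ_k → ∞`, `δ_k ∈ (0,1)` tends to 0,
and `f_k` minimizes `ρ_{C,γ_k}`, then `∫_{𝔸(1-δ_k,1)} |f_k| e^{-γ_k|z|²} dA → 0`. -/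
theorem planar_L1_nonconcentration (γ : ℕ → ℝ) (hγpos : ∀ k, 0 < γ k)
    (hγ : Tendsto γ atTop atTop)
    (δ : ℕ → ℝ) (hδ : ∀ k, δ k ∈ Ioo (0:ℝ) 1) (hδ0 : Tendsto δ atTop (𝓝 0))
    (f : ℕ → ℂ → ℂ) (hf : ∀ k, IsMinC (γ k) (f k)) :
    Tendsto (fun k => ∫⁻ z in ann (1 - δ k) 1, ENNReal.ofReal
        (‖f k z‖ * Real.exp (-(γ k) * ‖z‖ ^ 2)) ∂dA)
      atTop (𝓝 0) :=
  planar_L1_nonconcentration_general γ δ hδ0 f hf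
end

section
/- Planar parameter freedom: let α : (0,∞) → (0,∞) satisfy α_γ → 1 as γ → ∞. Then liminf_{γ→∞} inf_{f ∈ Pol(ℂ)} ∫_𝔻 (|f(z)| e^{−α_γ γ |z|²} − 1)² dA(z) ≥ ρ_C. -/
open MeasureTheory Filter Set Metric Polynomial
open scoped ENNReal Topology NNReal

theorem planar_parameter_freedom_general (α : ℝ → ℝ)
    (hα : Tendsto α atTop (𝓝 1)) :
    rhoCd ≤ liminf (fun γ : ℝ => ⨅ p : Polynomial ℂ,
        ∫⁻ z in ball (0:ℂ) 1, ENNReal.ofReal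
          ((‖p.eval z‖ * Real.exp (-(α γ * γ) * ‖z‖ ^ 2) - 1) ^ 2) ∂dA)
      atTop :=
  -- the integrand is that of `rhoC (α γ * γ)`, and `α γ * γ → ∞`
  (hα.pos_mul_atTop one_pos tendsto_id).liminf_le_liminf_comp

/-- planar parameter freedom. If `α : (0,∞) → (0,∞)` and `α_γ → 1`
as `γ → ∞`, then `liminf_{γ→∞} inf_f ∫_𝔻 (|f| e^{-α_γ γ |z|²} - 1)² dA ≥ ρ_C`. -/
theorem planar_parameter_freedom (α : ℝ → ℝ) (hαpos : ∀ γ : ℝ, 0 < γ → 0 < α γ)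
    (hα : Tendsto α atTop (𝓝 1)) :
    rhoCd ≤ liminf (fun γ : ℝ => ⨅ p : Polynomial ℂ,
        ∫⁻ z in ball (0:ℂ) 1, ENNReal.ofReal
          ((‖p.eval z‖ * Real.exp (-(α γ * γ) * ‖z‖ ^ 2) - 1) ^ 2) ∂dA)
      atTop :=
  planar_parameter_freedom_general α hα
end

section
/- If 0 < r < 1 and f is a minimizer of ρ_{H,r}, then (1/log(1/(1−r²))) ∫_{D(0,r)} |f(z)| dA(z) = (1/log(1/(1−r²))) ∫_{D(0,r)} |f(z)|² (1−|z|²) dA(z), and this common value is at most 1. -/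
open MeasureTheory Filter Set Metric Polynomial
open scoped ENNReal Topology NNReal

/-!
Scaling a minimizer `f` by a real `t ≥ 0` gives, with `c = log (1 / (1 - r²))`,
`c · ρ_{H,r}(t f) = t² A - 2 t B + c`, where `A = ∫_{D(0,r)} |f|² (1 - |z|²) dA` and
`B = ∫_{D(0,r)} |f| dA`; the constant term is `∫_{D(0,r)} dA / (1 - |z|²) = c`, computed in polar
coordinates. All three integrals are finite because `f` is continuous on the compact disk
`|z| ≤ r < 1`. Minimality at `t = 1` makes the derivative `2A - 2B` vanish, and then
`0 ≤ c · ρ_{H,r}(f) = c - B`.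
-/

instance : dA.IsAddHaarMeasure :=
  .smul _ (by simp) (by simpa using Real.pi_pos)

lemma dA_real_ball_zero_one : dA.real (ball (0:ℂ) 1) = 1 := by
  simp [dA, measureReal_def, Complex.volume_ball, ENNReal.toReal_mul, Real.pi_pos.le,
    Real.pi_pos.ne']

lemma setIntegral_ball_fun_norm_dA (r : ℝ) (g : ℝ → ℝ) :
    ∫ z in ball (0:ℂ) r, g ‖z‖ ∂dA = 2 * ∫ y in Ioo 0 r, y * g y := by
  have hball : (ball (0:ℂ) r).indicator (fun z => g ‖z‖) = fun z => (Iio r).indicator g ‖z‖ := by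
    ext z
    simp only [indicator, mem_ball_zero_iff, mem_Iio]
  have hradial : (fun y : ℝ => y ^ (2 - 1) • (Iio r).indicator g y)
      = (Iio r).indicator fun y => y * g y := by
    ext y
    simp only [indicator, mem_Iio, smul_eq_mul]
    split_ifs <;> simp
  rw [← integral_indicator measurableSet_ball, hball, integral_fun_norm_addHaar dA,
    Complex.finrank_real_complex, dA_real_ball_zero_one, hradial,
    integral_indicator measurableSet_Iio, Measure.restrict_restrict measurableSet_Iio,
    Iio_inter_Ioi]
  simp

lemma integral_Ioo_mul_inv_one_sub_sq {r : ℝ} (hr0 : 0 ≤ r) (hr1 : r < 1) :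
    ∫ y in Ioo 0 r, y * (1 - y ^ 2)⁻¹ = -Real.log (1 - r ^ 2) / 2 := by
  have hpos : ∀ y ∈ uIcc 0 r, 0 < 1 - y ^ 2 := by
    intro y hy
    rw [uIcc_of_le hr0] at hy
    nlinarith [hy.1, hy.2]
  have hderiv : ∀ y ∈ uIcc 0 r,
      HasDerivAt (fun y : ℝ => -Real.log (1 - y ^ 2) / 2) (y * (1 - y ^ 2)⁻¹) y := by
    intro y hy
    refine (((((hasDerivAt_pow 2 y).const_sub 1).log (hpos y hy).ne').neg).div_const
      2).congr_deriv ?_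
    field_simp
    norm_num
    ring
  have hcont : ContinuousOn (fun y : ℝ => y * (1 - y ^ 2)⁻¹) (uIcc 0 r) :=
    continuousOn_id.mul ((continuousOn_const.sub (continuousOn_pow 2)).inv₀
      fun y hy => (hpos y hy).ne')
  rw [← integral_Ioc_eq_integral_Ioo, ← intervalIntegral.integral_of_le hr0,
    intervalIntegral.integral_eq_sub_of_hasDerivAt hderiv hcont.intervalIntegrable]
  simp

lemma log_one_div_one_sub_sq_pos {r : ℝ} (hr0 : 0 < r) (hr1 : r < 1) :
    0 < Real.log (1 / (1 - r ^ 2)) :=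
  Real.log_pos (one_lt_one_div (by nlinarith) (by nlinarith))

lemma integral_ball_inv_one_sub_norm_sq {r : ℝ} (hr0 : 0 ≤ r) (hr1 : r < 1) :
    ∫ z in ball (0:ℂ) r, (1 - ‖z‖ ^ 2)⁻¹ ∂dA = Real.log (1 / (1 - r ^ 2)) := by
  rw [setIntegral_ball_fun_norm_dA r fun y => (1 - y ^ 2)⁻¹,
    integral_Ioo_mul_inv_one_sub_sq hr0 hr1, one_div, Real.log_inv]
  ring

lemma eq_of_isMinOn_Ici_one {a b c : ℝ}
    (h : IsMinOn (fun t : ℝ => t ^ 2 * a - 2 * t * b + c) (Ici 0) 1) : a = b := by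
  have hderiv : HasDerivAt (fun t : ℝ => t ^ 2 * a - 2 * t * b + c) (2 * a - 2 * b) 1 := by
    refine ((((hasDerivAt_pow 2 1).mul_const a).sub
      (((hasDerivAt_id 1).const_mul 2).mul_const b)).add_const c).congr_deriv ?_
    norm_num
  have := (h.isLocalMin (Ici_mem_nhds one_pos)).hasDerivAt_eq_zero hderiv
  linarith

section ClosedBall

variable {r : ℝ} {f : ℂ → ℂ}

lemma one_sub_norm_sq_pos (hr1 : r < 1) {z : ℂ} (hz : z ∈ closedBall (0:ℂ) r) :
    0 < 1 - ‖z‖ ^ 2 := by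
  have := mem_closedBall_zero_iff.mp hz
  nlinarith [norm_nonneg z]

lemma integrableOn_ball_of_continuousOn_closedBall {g : ℂ → ℝ}
    (hg : ContinuousOn g (closedBall 0 r)) : IntegrableOn g (ball 0 r) dA :=
  (hg.integrableOn_compact (isCompact_closedBall 0 r)).mono_set ball_subset_closedBall

lemma setLIntegral_ball_ofReal {g : ℂ → ℝ} (hg : ContinuousOn g (closedBall 0 r))
    (hg0 : ∀ z ∈ ball (0:ℂ) r, 0 ≤ g z) :
    ∫⁻ z in ball (0:ℂ) r, ENNReal.ofReal (g z) ∂dA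
      = ENNReal.ofReal (∫ z in ball (0:ℂ) r, g z ∂dA) :=
  (ofReal_integral_eq_lintegral_ofReal (integrableOn_ball_of_continuousOn_closedBall hg)
    (ae_restrict_of_forall_mem measurableSet_ball hg0)).symm

lemma integral_ball_hyperbolic_integrand_nonneg (hr1 : r < 1) (t : ℝ) :
    0 ≤ ∫ z in ball (0:ℂ) r, ((1 - ‖z‖ ^ 2) * (t * ‖f z‖) - 1) ^ 2 / (1 - ‖z‖ ^ 2) ∂dA :=
  setIntegral_nonneg measurableSet_ball fun _ hz =>
    div_nonneg (sq_nonneg _) (one_sub_norm_sq_pos hr1 (ball_subset_closedBall hz)).le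

variable (hr1 : r < 1) (hf : ContinuousOn f (closedBall 0 r))
include hr1 hf

lemma integral_ball_hyperbolic_integrand (hr0 : 0 ≤ r) (t : ℝ) :
    ∫ z in ball (0:ℂ) r, ((1 - ‖z‖ ^ 2) * (t * ‖f z‖) - 1) ^ 2 / (1 - ‖z‖ ^ 2) ∂dA
      = t ^ 2 * (∫ z in ball (0:ℂ) r, ‖f z‖ ^ 2 * (1 - ‖z‖ ^ 2) ∂dA)
        - 2 * t * (∫ z in ball (0:ℂ) r, ‖f z‖ ∂dA) + Real.log (1 / (1 - r ^ 2)) := by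
  have hinv : ContinuousOn (fun z : ℂ => (1 - ‖z‖ ^ 2)⁻¹) (closedBall 0 r) :=
    ContinuousOn.inv₀ (by fun_prop) fun z hz => (one_sub_norm_sq_pos hr1 hz).ne'
  rw [← integral_ball_inv_one_sub_norm_sq hr0 hr1, ← integral_const_mul, ← integral_const_mul,
    ← integral_sub, ← integral_add]
  · refine setIntegral_congr_fun measurableSet_ball fun z hz => ?_
    have := one_sub_norm_sq_pos hr1 (ball_subset_closedBall hz)
    field_simp
    ring
  all_goals exact integrableOn_ball_of_continuousOn_closedBall (by fun_prop)

lemma rhoH_real_mul {t : ℝ} (ht : 0 ≤ t) :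
    rhoH r (fun z => t * f z) = (ENNReal.ofReal (Real.log (1 / (1 - r ^ 2))))⁻¹ *
      ENNReal.ofReal (∫ z in ball (0:ℂ) r,
        ((1 - ‖z‖ ^ 2) * (t * ‖f z‖) - 1) ^ 2 / (1 - ‖z‖ ^ 2) ∂dA) := by
  have hw : ∀ z ∈ closedBall (0:ℂ) r, 0 < 1 - ‖z‖ ^ 2 := fun z hz => one_sub_norm_sq_pos hr1 hz
  rw [← setLIntegral_ball_ofReal
    (g := fun z => ((1 - ‖z‖ ^ 2) * (t * ‖f z‖) - 1) ^ 2 / (1 - ‖z‖ ^ 2))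
    (ContinuousOn.div (by fun_prop) (by fun_prop) fun z hz => (hw z hz).ne')
    fun z hz => div_nonneg (sq_nonneg _) (hw z (ball_subset_closedBall hz)).le]
  simp only [rhoH, norm_mul, Complex.norm_real, Real.norm_of_nonneg ht]

end ClosedBall

lemma IsMinH.isMinOn_real_mul {r : ℝ} {f : ℂ → ℂ} (hf : IsMinH r f) (hr0 : 0 < r)
    (hr1 : r < 1) :
    IsMinOn (fun t : ℝ => t ^ 2 * (∫ z in ball (0:ℂ) r, ‖f z‖ ^ 2 * (1 - ‖z‖ ^ 2) ∂dA)
      - 2 * t * (∫ z in ball (0:ℂ) r, ‖f z‖ ∂dA) + Real.log (1 / (1 - r ^ 2))) (Ici 0) 1 := by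
  intro t ht
  obtain ⟨hfd, hfmin⟩ := hf
  have hfc : ContinuousOn f (closedBall 0 r) := hfd.continuousOn.mono (closedBall_subset_ball hr1)
  have hc : ENNReal.ofReal (Real.log (1 / (1 - r ^ 2))) ≠ 0 :=
    (ENNReal.ofReal_pos.mpr (log_one_div_one_sub_sq_pos hr0 hr1)).ne'
  have hρ1 := rhoH_real_mul hr1 hfc (t := 1) zero_le_one
  rw [show (fun z => ((1:ℝ):ℂ) * f z) = f by simp] at hρ1
  have h := hfmin _ (hfd.const_mul (t : ℂ))
  rwa [hρ1, rhoH_real_mul hr1 hfc ht,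
    ENNReal.mul_le_mul_iff_right (by simp) (ENNReal.inv_ne_top.mpr hc),
    ENNReal.ofReal_le_ofReal_iff (integral_ball_hyperbolic_integrand_nonneg hr1 t),
    integral_ball_hyperbolic_integrand hr1 hfc hr0.le 1,
    integral_ball_hyperbolic_integrand hr1 hfc hr0.le t] at h

/-- if `0 < r < 1` and `f` is a minimizer of `ρ_{H,r}`, then
`(1/log(1/(1-r²))) ∫_{D(0,r)} |f| dA = (1/log(1/(1-r²))) ∫_{D(0,r)} |f|² (1-|z|²) dA`,
and this common value is at most 1. -/
theorem hyperbolic_variational_identity (r : ℝ) (hr0 : 0 < r) (hr1 : r < 1)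
    (f : ℂ → ℂ) (hf : IsMinH r f) :
    ((ENNReal.ofReal (Real.log (1 / (1 - r ^ 2))))⁻¹ *
        ∫⁻ z in ball (0:ℂ) r, ENNReal.ofReal (‖f z‖) ∂dA)
      = ((ENNReal.ofReal (Real.log (1 / (1 - r ^ 2))))⁻¹ *
        ∫⁻ z in ball (0:ℂ) r, ENNReal.ofReal
          (‖f z‖ ^ 2 * (1 - ‖z‖ ^ 2)) ∂dA) ∧
    ((ENNReal.ofReal (Real.log (1 / (1 - r ^ 2))))⁻¹ *
        ∫⁻ z in ball (0:ℂ) r, ENNReal.ofReal (‖f z‖) ∂dA) ≤ 1 := by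
  have hfc : ContinuousOn f (closedBall 0 r) :=
    hf.1.continuousOn.mono (closedBall_subset_ball hr1)
  have hAB := eq_of_isMinOn_Ici_one (hf.isMinOn_real_mul hr0 hr1)
  have hρ_nonneg := integral_ball_hyperbolic_integrand_nonneg hr1 (f := f) 1
  rw [integral_ball_hyperbolic_integrand hr1 hfc hr0.le, hAB] at hρ_nonneg
  rw [setLIntegral_ball_ofReal hfc.norm fun _ _ => norm_nonneg _,
    setLIntegral_ball_ofReal (by fun_prop) fun z hz =>
      mul_nonneg (sq_nonneg _) (one_sub_norm_sq_pos hr1 (ball_subset_closedBall hz)).le, hAB]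
  refine ⟨rfl, ?_⟩
  rw [ENNReal.inv_mul_le_iff
    (ENNReal.ofReal_pos.mpr (log_one_div_one_sub_sq_pos hr0 hr1)).ne' ENNReal.ofReal_ne_top, mul_one]
  exact ENNReal.ofReal_le_ofReal (by linarith)
end

section
/- If 0 < r < 1 and f is a minimizer of ρ_{H,r}, then ρ_{H,r}(f) = 1 − (1/log(1/(1−r²))) ∫_{D(0,r)} |f(z)| dA(z). -/
open MeasureTheory Filter Set Metric Polynomial
open scoped ENNReal Topology NNReal

/-!
Write `w = 1 - |z|²` and, over `D(0,r)` against `dA`, `A = ∫ w |f|²`, `B = ∫ |f|` and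
`C = ∫ 1/w = log (1/(1-r²))`. Expanding the square gives, for `s ≥ 0`,
`C · ρ_{H,r}(s f) = s² A - 2 s B + C`. Comparing `f` with `0` makes `A` and `B` finite, and since
`f` is a minimizer this quadratic in `s` is minimal on `[0, ∞)` at `s = 1`, which forces `A = B`.
Hence `C · ρ_{H,r}(f) = A - 2 B + C = C - B`.
-/

theorem Complex.setIntegral_ball_fun_norm {E : Type*} [NormedAddCommGroup E] [NormedSpace ℝ E]
    (g : ℝ → E) {r : ℝ} (hr : 0 ≤ r) :
    ∫ z in ball (0 : ℂ) r, g ‖z‖ = (2 * Real.pi) • ∫ y in (0 : ℝ)..r, y • g y := by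
  have hind : (ball (0 : ℂ) r).indicator (fun z => g ‖z‖) = fun z => (Iio r).indicator g ‖z‖ := by
    ext z
    simp [indicator]
  have hrad : (fun y : ℝ => y ^ (Module.finrank ℝ ℂ - 1) • (Iio r).indicator g y)
      = (Iio r).indicator fun y => y • g y := by
    ext y
    by_cases hy : y < r <;> simp [indicator, hy, Complex.finrank_real_complex]
  rw [← integral_indicator measurableSet_ball, hind, integral_fun_norm_addHaar, hrad,
    setIntegral_indicator measurableSet_Iio, Ioi_inter_Iio, ← integral_Ioc_eq_integral_Ioo,
    ← intervalIntegral.integral_of_le hr]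
  simp [Complex.finrank_real_complex, measureReal_def, Complex.volume_ball]
  module

theorem intervalIntegral.integral_div_one_sub_sq {r : ℝ} (hr : |r| < 1) :
    ∫ y in (0 : ℝ)..r, y / (1 - y ^ 2) = -(1 / 2) * Real.log (1 - r ^ 2) := by
  have hpos : ∀ y ∈ uIcc (0 : ℝ) r, 0 < 1 - y ^ 2 := by
    intro y hy
    have : |y| ≤ |r| := by simpa using abs_sub_left_of_mem_uIcc hy
    nlinarith [sq_abs y, abs_nonneg y]
  have hderiv : ∀ y ∈ uIcc (0 : ℝ) r,
      HasDerivAt (fun y => -(1 / 2) * Real.log (1 - y ^ 2)) (y / (1 - y ^ 2)) y := by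
    intro y hy
    refine ((((hasDerivAt_pow 2 y).const_sub 1).log (hpos y hy).ne').const_mul
      (-(1 / 2 : ℝ))).congr_deriv ?_
    push_cast
    ring
  have hcont : ContinuousOn (fun y : ℝ => y / (1 - y ^ 2)) (uIcc 0 r) :=
    continuousOn_id.div (by fun_prop) fun y hy => (hpos y hy).ne'
  rw [intervalIntegral.integral_eq_sub_of_hasDerivAt hderiv hcont.intervalIntegrable]
  simp

theorem lintegral_ball_inv_one_sub_norm_sq {r : ℝ} (hr0 : 0 ≤ r) (hr1 : r < 1) :
    ∫⁻ z in ball (0 : ℂ) r, ENNReal.ofReal ((1 - ‖z‖ ^ 2)⁻¹) ∂dA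
      = ENNReal.ofReal (Real.log (1 / (1 - r ^ 2))) := by
  have hpos : ∀ z ∈ closedBall (0 : ℂ) r, 0 < 1 - ‖z‖ ^ 2 := fun z hz => by
    have : ‖z‖ ≤ r := by simpa using hz
    nlinarith [norm_nonneg z]
  have hint : IntegrableOn (fun z : ℂ => (1 - ‖z‖ ^ 2)⁻¹) (ball 0 r) :=
    (ContinuousOn.integrableOn_compact (isCompact_closedBall 0 r)
      ((by fun_prop : Continuous fun z : ℂ => 1 - ‖z‖ ^ 2).continuousOn.inv₀
        fun z hz => (hpos z hz).ne')).mono_set ball_subset_closedBall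
  have hnonneg : 0 ≤ᵐ[volume.restrict (ball (0 : ℂ) r)] fun z => (1 - ‖z‖ ^ 2)⁻¹ :=
    (ae_restrict_iff' measurableSet_ball).2 <| ae_of_all _ fun z hz =>
      (inv_pos.2 (hpos z (ball_subset_closedBall hz))).le
  have hvol : ∫ z in ball (0 : ℂ) r, (1 - ‖z‖ ^ 2)⁻¹ = Real.pi * Real.log (1 / (1 - r ^ 2)) := by
    simp only [Complex.setIntegral_ball_fun_norm (fun y => (1 - y ^ 2)⁻¹) hr0, smul_eq_mul,
      ← div_eq_mul_inv,
      intervalIntegral.integral_div_one_sub_sq (abs_lt.2 ⟨by linarith, hr1⟩), one_div,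
      Real.log_inv]
    ring
  rw [dA, Measure.restrict_smul, lintegral_smul_measure,
    ← ofReal_integral_eq_lintegral_ofReal hint hnonneg, hvol, ENNReal.ofReal_mul Real.pi_pos.le,
    smul_eq_mul, ← mul_assoc, ENNReal.inv_mul_cancel (by simpa using Real.pi_pos)
      ENNReal.ofReal_ne_top, one_mul]

theorem eq_of_isMinOn_quadratic {a b : ℝ} (ha : 0 ≤ a)
    (h : IsMinOn (fun s => s ^ 2 * a - 2 * s * b) (Ici 0) 1) : a = b := by
  have h0 : a - 2 * b ≤ 0 := by simpa using h (mem_Ici.2 le_rfl)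
  rcases ha.eq_or_lt with rfl | ha
  · have h2 : -(2 * b) ≤ -(2 * 2 * b) := by simpa using h (mem_Ici.2 zero_le_two)
    linarith
  · have hb : 0 ≤ b / a := div_nonneg (by linarith) ha.le
    have hba : a - 2 * b ≤ (b / a) ^ 2 * a - 2 * (b / a) * b := by simpa using h hb
    have hsq : (b / a) ^ 2 * a - 2 * (b / a) * b = -(b ^ 2 / a) := by
      field_simp
      ring
    have : (a - 2 * b) * a ≤ -b ^ 2 := by
      rw [← le_div_iff₀ ha, neg_div]
      linarith
    have : (a - b) ^ 2 ≤ 0 := by nlinarith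
    nlinarith

section WeightedDiscrepancy

variable {α : Type*} [MeasurableSpace α] {μ : Measure α} {w a : α → ℝ}

noncomputable def weightedDiscrepancy (μ : Measure α) (w a : α → ℝ) : ℝ≥0∞ :=
  ∫⁻ x, ENNReal.ofReal ((w x * a x - 1) ^ 2 / w x) ∂μ

theorem weightedDiscrepancy_const_mul_add (hw : ∀ᵐ x ∂μ, 0 < w x) (ha : ∀ᵐ x ∂μ, 0 ≤ a x)
    (hw_meas : AEMeasurable w μ) (ha_meas : AEMeasurable a μ) {s : ℝ} (hs : 0 ≤ s) :
    weightedDiscrepancy μ w (fun x => s * a x)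
        + ENNReal.ofReal (2 * s) * ∫⁻ x, ENNReal.ofReal (a x) ∂μ
      = ENNReal.ofReal (s ^ 2) * ∫⁻ x, ENNReal.ofReal (w x * a x ^ 2) ∂μ
        + ∫⁻ x, ENNReal.ofReal (w x)⁻¹ ∂μ := by
  have hw_inv : AEMeasurable (fun x => ENNReal.ofReal (w x)⁻¹) μ := hw_meas.inv.ennreal_ofReal
  rw [weightedDiscrepancy, ← lintegral_const_mul' _ _ ENNReal.ofReal_ne_top,
    ← lintegral_const_mul' _ _ ENNReal.ofReal_ne_top,
    ← lintegral_add_right' _ (ha_meas.ennreal_ofReal.const_mul _),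
    ← lintegral_add_right' _ hw_inv]
  refine lintegral_congr_ae ?_
  filter_upwards [hw, ha] with x hwx hax
  rw [← ENNReal.ofReal_mul (by positivity), ← ENNReal.ofReal_mul (by positivity),
    ← ENNReal.ofReal_add (by positivity) (by positivity),
    ← ENNReal.ofReal_add (by positivity) (by positivity)]
  congr 1
  field_simp
  ring

theorem lintegral_mul_sq_le (hw : ∀ᵐ x ∂μ, 0 < w x) (hw_meas : AEMeasurable w μ) :
    ∫⁻ x, ENNReal.ofReal (w x * a x ^ 2) ∂μ
      ≤ 2 * weightedDiscrepancy μ w a + 2 * ∫⁻ x, ENNReal.ofReal (w x)⁻¹ ∂μ := by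
  have hw_inv : AEMeasurable (fun x => ENNReal.ofReal (w x)⁻¹) μ := hw_meas.inv.ennreal_ofReal
  rw [weightedDiscrepancy, ← lintegral_const_mul' _ _ ENNReal.ofNat_ne_top,
    ← lintegral_const_mul' _ _ ENNReal.ofNat_ne_top,
    ← lintegral_add_right' _ (hw_inv.const_mul _)]
  refine lintegral_mono_ae ?_
  filter_upwards [hw] with x hwx
  rw [← ENNReal.ofReal_ofNat 2, ← ENNReal.ofReal_mul zero_le_two,
    ← ENNReal.ofReal_mul zero_le_two, ← ENNReal.ofReal_add (by positivity) (by positivity)]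
  refine ENNReal.ofReal_le_ofReal ?_
  -- `(w a)² ≤ 2 (w a - 1)² + 2`, i.e. `0 ≤ (w a - 2)²`, divided by `w`
  have : 2 * ((w x * a x - 1) ^ 2 / w x) + 2 * (w x)⁻¹ - w x * a x ^ 2
      = (w x * a x - 2) ^ 2 / w x := by
    field_simp
    ring
  nlinarith [div_nonneg (sq_nonneg (w x * a x - 2)) hwx.le]

theorem weightedDiscrepancy_add_lintegral_eq (hw : ∀ᵐ x ∂μ, 0 < w x) (ha : ∀ᵐ x ∂μ, 0 ≤ a x)
    (hw_meas : AEMeasurable w μ) (ha_meas : AEMeasurable a μ)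
    (hC : ∫⁻ x, ENNReal.ofReal (w x)⁻¹ ∂μ ≠ ⊤)
    (hmin : IsMinOn (fun s => weightedDiscrepancy μ w fun x => s * a x) (Ici 0) 1) :
    weightedDiscrepancy μ w a + ∫⁻ x, ENNReal.ofReal (a x) ∂μ
      = ∫⁻ x, ENNReal.ofReal (w x)⁻¹ ∂μ := by
  set D := fun s : ℝ => weightedDiscrepancy μ w fun x => s * a x
  set A := ∫⁻ x, ENNReal.ofReal (w x * a x ^ 2) ∂μ
  set B := ∫⁻ x, ENNReal.ofReal (a x) ∂μ
  set C := ∫⁻ x, ENNReal.ofReal (w x)⁻¹ ∂μ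
  have expand : ∀ s, 0 ≤ s → D s + ENNReal.ofReal (2 * s) * B = ENNReal.ofReal (s ^ 2) * A + C :=
    fun s hs => weightedDiscrepancy_const_mul_add hw ha hw_meas ha_meas hs
  have hD1 : D 1 = weightedDiscrepancy μ w a := by simp only [D, one_mul]
  have expand_one : weightedDiscrepancy μ w a + 2 * B = A + C := by
    simpa [hD1] using expand 1 zero_le_one
  have hD0 : D 0 = C := by simpa using expand 0 le_rfl
  have hD1_ne : weightedDiscrepancy μ w a ≠ ⊤ :=
    hD1 ▸ ne_top_of_le_ne_top hC (hD0 ▸ hmin (mem_Ici.2 le_rfl))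
  have hA : A ≠ ⊤ := ne_top_of_le_ne_top (by finiteness) (lintegral_mul_sq_le hw hw_meas)
  have hB : B ≠ ⊤ := by
    refine ne_top_of_le_ne_top (b := A + C) (by finiteness) ?_
    calc B ≤ 2 * B := le_mul_of_one_le_left' one_le_two
      _ ≤ weightedDiscrepancy μ w a + 2 * B := le_add_self
      _ = A + C := expand_one
  have hDs_ne : ∀ s, 0 ≤ s → D s ≠ ⊤ := fun s hs =>
    ne_top_of_le_ne_top (by finiteness) ((le_add_right le_rfl).trans (expand s hs).le)
  have hDs : ∀ s, 0 ≤ s → (D s).toReal = s ^ 2 * A.toReal - 2 * s * B.toReal + C.toReal := by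
    intro s hs
    have := congrArg ENNReal.toReal (expand s hs)
    rw [ENNReal.toReal_add (hDs_ne s hs) (by finiteness), ENNReal.toReal_add (by finiteness) hC,
      ENNReal.toReal_mul, ENNReal.toReal_mul, ENNReal.toReal_ofReal (by positivity),
      ENNReal.toReal_ofReal (by positivity)] at this
    linarith
  have hAB : A = B := by
    refine (ENNReal.toReal_eq_toReal_iff' hA hB).1 <| eq_of_isMinOn_quadratic ENNReal.toReal_nonneg
      fun s hs => ?_
    have := ENNReal.toReal_mono (hDs_ne s hs) (hmin hs)
    simp only [hDs s hs, hDs 1 zero_le_one] at this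
    show (_ : ℝ) ≤ _
    linarith
  rw [hAB, two_mul, ← add_assoc] at expand_one
  exact (ENNReal.add_left_inj hB).1 (expand_one.trans (add_comm B C))

end WeightedDiscrepancy

theorem rhoH_eq_weightedDiscrepancy (r : ℝ) (f : ℂ → ℂ) :
    rhoH r f = (ENNReal.ofReal (Real.log (1 / (1 - r ^ 2))))⁻¹ *
      weightedDiscrepancy (dA.restrict (ball 0 r)) (fun z => 1 - ‖z‖ ^ 2) fun z => ‖f z‖ :=
  rfl

theorem ofReal_log_one_div_one_sub_sq_ne_zero {r : ℝ} (hr0 : 0 < r ^ 2) (hr1 : r ^ 2 < 1) :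
    ENNReal.ofReal (Real.log (1 / (1 - r ^ 2))) ≠ 0 :=
  (ENNReal.ofReal_pos.2 <| Real.log_pos <| (one_lt_div (by linarith)).2 (by linarith)).ne'

theorem IsMinH.isMinOn_weightedDiscrepancy {r : ℝ} {f : ℂ → ℂ} (hr0 : 0 < r) (hr1 : r < 1)
    (hf : IsMinH r f) :
    IsMinOn (fun s : ℝ => weightedDiscrepancy (dA.restrict (ball 0 r))
      (fun z => 1 - ‖z‖ ^ 2) fun z => s * ‖f z‖) (Ici 0) 1 := fun s (hs : 0 ≤ s) => by
  have hC : ENNReal.ofReal (Real.log (1 / (1 - r ^ 2))) ≠ 0 :=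
    ofReal_log_one_div_one_sub_sq_ne_zero (by positivity) (by nlinarith)
  have := hf.2 (fun z => s * f z) (hf.1.const_mul _)
  simp only [rhoH_eq_weightedDiscrepancy, norm_mul, Complex.norm_real, Real.norm_of_nonneg hs]
    at this
  simpa using (ENNReal.mul_le_mul_iff_right (ENNReal.inv_ne_zero.2 ENNReal.ofReal_ne_top)
    (ENNReal.inv_ne_top.2 hC)).1 this

/-- if `0 < r < 1` and `f` is a minimizer of `ρ_{H,r}`, then
`ρ_{H,r}(f) = 1 - (1/log(1/(1-r²))) ∫_{D(0,r)} |f| dA`. -/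
theorem hyperbolic_minimizer_value (r : ℝ) (hr0 : 0 < r) (hr1 : r < 1)
    (f : ℂ → ℂ) (hf : IsMinH r f) :
    rhoH r f = 1 - (ENNReal.ofReal (Real.log (1 / (1 - r ^ 2))))⁻¹ *
        ∫⁻ z in ball (0:ℂ) r, ENNReal.ofReal (‖f z‖) ∂dA := by
  have hC : ENNReal.ofReal (Real.log (1 / (1 - r ^ 2))) ≠ 0 :=
    ofReal_log_one_div_one_sub_sq_ne_zero (by positivity) (by nlinarith)
  have hw : ∀ᵐ z ∂dA.restrict (ball 0 r), 0 < 1 - ‖z‖ ^ 2 :=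
    (ae_restrict_iff' measurableSet_ball).2 <| ae_of_all _ fun z hz => by
      have : ‖z‖ < r := by simpa using hz
      nlinarith [norm_nonneg z]
  have hf_meas : AEMeasurable (fun z => ‖f z‖) (dA.restrict (ball 0 r)) :=
    (continuous_norm.comp_continuousOn
      (hf.1.continuousOn.mono (ball_subset_ball hr1.le))).aemeasurable measurableSet_ball
  have hC_eq := lintegral_ball_inv_one_sub_norm_sq hr0.le hr1
  have key := weightedDiscrepancy_add_lintegral_eq hw (ae_of_all _ fun z => norm_nonneg (f z))
    (by fun_prop) hf_meas (hC_eq ▸ ENNReal.ofReal_ne_top) (hf.isMinOn_weightedDiscrepancy hr0 hr1)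
  rw [hC_eq] at key
  have hB : ∫⁻ z in ball (0:ℂ) r, ENNReal.ofReal (‖f z‖) ∂dA ≠ ⊤ :=
    ne_top_of_le_ne_top ENNReal.ofReal_ne_top (key ▸ le_add_self)
  rw [rhoH_eq_weightedDiscrepancy]
  refine ENNReal.eq_sub_of_add_eq (ENNReal.mul_ne_top (ENNReal.inv_ne_top.2 hC) hB) ?_
  rw [← mul_add, key, ENNReal.inv_mul_cancel hC ENNReal.ofReal_ne_top]
end
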